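/- arXiv:1612.06810 — 8 statements merged into one kernel-verified Lean document; each statement's English description precedes it below -/
import Mathlib

section
/- Let G be a group, φ an automorphism of G and g ∈ G such that φ ∘ φ = conj_g and φ(g) = g. In the semidirect product G ⋊ ℤ, where n ∈ ℤ acts on G by the automorphism φⁿ, the cyclic subgroup generated by the element (g⁻¹, 2) is a normal subgroup. -/
/-! The element `x = (g⁻¹, 2)` is central in `G ⋊ ℤ`: moving `(a, m)` past it costs
`φᵐ(g⁻¹) = g⁻¹` on one side and `φ²(a) = g a g⁻¹` on the other, and both give `(a g⁻¹, m + 2)`.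
A subgroup of the centre is normal. -/

theorem Subgroup.normal_of_le_center {G : Type*} [Group G] {H : Subgroup G}
    (hH : H ≤ center G) : H.Normal :=
  ⟨fun n hn g => by rwa [mem_center_iff.mp (hH hn) g, mul_inv_cancel_right]⟩

theorem MulAut.zpow_apply_eq_self {G : Type*} [Group G] {φ : MulAut G} {g : G}
    (hg : φ g = g) (n : ℤ) : (φ ^ n) g = g :=
  (MulAction.stabilizer (MulAut G) g).zpow_mem (MulAction.mem_stabilizer_iff.mpr hg) n

namespace SemidirectProduct

variable {N H : Type*} [Group N] [Group H] {ψ : H →* MulAut N}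

theorem inv_mk_mem_center {g : N} {h : H} (hh : h ∈ Subgroup.center H)
    (hψh : ψ h = MulAut.conj g) (hψg : ∀ k, ψ k g = g) :
    (⟨g⁻¹, h⟩ : N ⋊[ψ] H) ∈ Subgroup.center (N ⋊[ψ] H) := by
  refine Subgroup.mem_center_iff.mpr fun ⟨a, k⟩ => ?_
  ext
  · simp [hψh, hψg, mul_assoc]
  · exact Subgroup.mem_center_iff.mp hh k

end SemidirectProduct

/-- If `φ ∘ φ = conj_g` and `φ(g) = g`, then in the semidirect product `G ⋊ ℤ`
(where `n ∈ ℤ` acts on `G` by `φⁿ`), the cyclic subgroup generated by `(g⁻¹, 2)`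
is normal. -/
theorem stmt_3 {G : Type*} [Group G] (φ : MulAut G) (g : G)
    (h1 : φ * φ = MulAut.conj g) (h2 : φ g = g) :
    (Subgroup.zpowers
      (⟨g⁻¹, Multiplicative.ofAdd 2⟩ :
        G ⋊[zpowersHom (MulAut G) φ] Multiplicative ℤ)).Normal := by
  refine Subgroup.normal_of_le_center (Subgroup.zpowers_le.mpr ?_)
  refine SemidirectProduct.inv_mk_mem_center (Subgroup.mem_center_iff.mpr fun k => mul_comm k _)
    ?_ fun k => MulAut.zpow_apply_eq_self h2 _
  rw [zpowersHom_apply, toAdd_ofAdd, zpow_two, h1]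
end

section
/- Let G be a group and for i = 1, 2 let Ḡᵢ be a group, ιᵢ : G → Ḡᵢ an injective homomorphism whose image is a normal subgroup of index 2, and xᵢ ∈ Ḡᵢ with xᵢ ∉ ιᵢ(G). Let φᵢ be the automorphism of G determined by ιᵢ(φᵢ(a)) = xᵢ·ιᵢ(a)·xᵢ⁻¹ for all a ∈ G, and let gᵢ ∈ G be the element with ιᵢ(gᵢ) = xᵢ². If there exists h ∈ G with φ₂ = φ₁ ∘ conj_h and g₂ = φ₁(h)·g₁·h, then there exists a group isomorphism α : Ḡ₁ → Ḡ₂ such that α ∘ ι₁ = ι₂. (Equivalent pairs in P(G) give isomorphic extensions of G by C₂.) -/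
/-!
Let `ι : G → Ē` be injective with image of index two and `x ∉ ι(G)`. Every element of `Ē` is
`ι a` or `ι a * x`, and normal forms multiply using only `φ` and `g`, where conjugation by `x`
induces `φ` on `ι(G)` and `x ^ 2 = ι g`. So `Ē` maps to a group `H` extending `ψ : G →* H` as soon
as some `t ∈ H` induces `φ` on `ψ(G)` with `t ^ 2 = ψ g`. If `(φ₂, g₂)` is equivalent to `(φ₁, g₁)`
via `h`, then `x₂ * (ι₂ h)⁻¹` is such an element of `Ē₂`; the relation is symmetric (via `h⁻¹`),
so there are maps both ways, and their composites fix `ι(G)` and `x`, hence are the identity.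
-/

namespace Subgroup

variable {E : Type*} [Group E] {K : Subgroup E}

lemma mul_inv_mem_of_index_eq_two (hK : K.index = 2) {x y : E} (hx : x ∉ K) (hy : y ∉ K) :
    y * x⁻¹ ∈ K :=
  (mul_mem_iff_of_index_two hK).2 (iff_of_false hy (inv_mem_iff.not.2 hx))

end Subgroup

namespace MonoidHom

variable {G E H : Type*} [Group G] [Group E] [Group H]

/-- `(φ, g)` is the pair in `P(G)` attached to `t` through `ψ`. -/
def Realizes (ψ : G →* H) (φ : G → G) (g : G) (t : H) : Prop :=
  (∀ a, ψ (φ a) = t * ψ a * t⁻¹) ∧ ψ g = t ^ 2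

lemma Realizes.mul_map_eq {ψ : G →* H} {φ : G → G} {g : G} {t : H} (ht : ψ.Realizes φ g t)
    (a : G) : t * ψ a = ψ (φ a) * t := by
  rw [ht.1, inv_mul_cancel_right]

variable {ι : G →* E} {x : E}

lemma exists_eq_or_eq_mul_of_index_eq_two (hidx : ι.range.index = 2) (hx : x ∉ ι.range)
    (y : E) : ∃ a, y = ι a ∨ y = ι a * x := by
  by_cases hy : y ∈ ι.range
  · obtain ⟨a, rfl⟩ := hy
    exact ⟨a, .inl rfl⟩
  · obtain ⟨a, ha⟩ := Subgroup.mul_inv_mem_of_index_eq_two hidx hx hy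
    exact ⟨a, .inr (by rw [ha, inv_mul_cancel_right])⟩

lemma hom_ext_of_index_eq_two (hidx : ι.range.index = 2) (hx : x ∉ ι.range) {f₁ f₂ : E →* H}
    (hι : ∀ a, f₁ (ι a) = f₂ (ι a)) (hfx : f₁ x = f₂ x) : f₁ = f₂ := by
  ext y
  obtain ⟨a, rfl | rfl⟩ := exists_eq_or_eq_mul_of_index_eq_two hidx hx y
  · exact hι a
  · rw [map_mul, map_mul, hι, hfx]

lemma exists_lift_of_index_eq_two (hinj : Function.Injective ι) (hidx : ι.range.index = 2)
    (hx : x ∉ ι.range) {φ : G → G} {g : G} (hxr : ι.Realizes φ g x) (ψ : G →* H) {t : H}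
    (ht : ψ.Realizes φ g t) : ∃ f : E →* H, (∀ a, f (ι a) = ψ a) ∧ f x = t := by
  classical
  let s := Function.invFun ι
  have hs : ∀ a, s (ι a) = a := Function.leftInverse_invFun hinj
  let f : E → H := fun y => if y ∈ ι.range then ψ (s y) else ψ (s (y * x⁻¹)) * t
  have hf : ∀ a, f (ι a) = ψ a := fun a => by simp [f, hs]
  have hfx : ∀ a, f (ι a * x) = ψ a * t := fun a => by
    have hax : ι a * x ∉ ι.range := by rwa [ι.range.mul_mem_cancel_left ⟨a, rfl⟩]
    simp only [f, if_neg hax, mul_inv_cancel_right, hs]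
  refine ⟨⟨⟨f, by simpa using hf 1⟩, fun y z => ?_⟩, hf, by simpa using hfx 1⟩
  change f (y * z) = f y * f z
  obtain ⟨a, rfl | rfl⟩ := exists_eq_or_eq_mul_of_index_eq_two hidx hx y <;>
  obtain ⟨b, rfl | rfl⟩ := exists_eq_or_eq_mul_of_index_eq_two hidx hx z
  · rw [← map_mul, hf, hf, hf, map_mul]
  · rw [← mul_assoc, ← map_mul, hfx, hf, hfx, map_mul, mul_assoc]
  · rw [mul_assoc, hxr.mul_map_eq, ← mul_assoc, ← map_mul, hfx, hfx, hf, map_mul, mul_assoc,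
      mul_assoc (ψ a) t, ht.mul_map_eq]
  · have hyz : ι a * x * (ι b * x) = ι (a * φ b * g) := by
      rw [map_mul, map_mul, hxr.2, mul_assoc, ← mul_assoc x, hxr.mul_map_eq, sq]; group
    rw [hyz, hf, hfx, hfx, map_mul, map_mul, ht.2, sq, ← mul_assoc (ψ a * t), mul_assoc (ψ a) t,
      ht.mul_map_eq]
    group

end MonoidHom

namespace MulAut

variable {G : Type*} [Group G]

lemma pair_equiv_symm {φ₁ φ₂ : MulAut G} {g₁ g₂ h : G} (hφ : φ₂ = φ₁ * MulAut.conj h)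
    (hg : g₂ = φ₁ h * g₁ * h) : φ₁ = φ₂ * MulAut.conj h⁻¹ ∧ g₁ = φ₂ h⁻¹ * g₂ * h⁻¹ := by
  have hφh : φ₂ h⁻¹ = φ₁ h⁻¹ := by simp [hφ]
  refine ⟨by rw [hφ, mul_assoc, ← map_mul, mul_inv_cancel, map_one, mul_one], ?_⟩
  rw [hφh, hg, map_inv]; group

lemma realizes_of_pair_equiv {E : Type*} [Group E] {ι : G →* E} {x : E}
    {φ₁ φ₂ : MulAut G} {g₁ g₂ h : G} (hx : ι.Realizes φ₂ g₂ x)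
    (hφ : φ₂ = φ₁ * MulAut.conj h) (hg : g₂ = φ₁ h * g₁ * h) :
    ι.Realizes φ₁ g₁ (x * (ι h)⁻¹) := by
  have hφ₁ : ∀ a, ι (φ₁ a) = x * ι (h⁻¹ * a * h) * x⁻¹ := fun a => by
    rw [← hx.1, hφ]; simp [mul_assoc]
  obtain ⟨-, hg₁⟩ := pair_equiv_symm hφ hg
  refine ⟨fun a => ?_, ?_⟩
  · rw [hφ₁]; simp only [map_mul, map_inv]; group
  · rw [hg₁, map_mul, map_mul, hx.2, hx.1]; simp only [map_inv, sq]; group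

end MulAut

theorem stmt_5_general {G : Type*} [Group G] {Gb₁ Gb₂ : Type*} [Group Gb₁] [Group Gb₂]
    (ι₁ : G →* Gb₁) (ι₂ : G →* Gb₂)
    (hinj₁ : Function.Injective ι₁) (hinj₂ : Function.Injective ι₂)
    (hidx₁ : ι₁.range.index = 2) (hidx₂ : ι₂.range.index = 2)
    (x₁ : Gb₁) (x₂ : Gb₂) (hx₁ : x₁ ∉ ι₁.range) (hx₂ : x₂ ∉ ι₂.range)
    (φ₁ φ₂ : MulAut G)
    (hφ₁ : ∀ a : G, ι₁ (φ₁ a) = x₁ * ι₁ a * x₁⁻¹)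
    (hφ₂ : ∀ a : G, ι₂ (φ₂ a) = x₂ * ι₂ a * x₂⁻¹)
    (g₁ g₂ : G) (hg₁ : ι₁ g₁ = x₁ ^ 2) (hg₂ : ι₂ g₂ = x₂ ^ 2)
    (heq : ∃ h : G, φ₂ = φ₁ * MulAut.conj h ∧ g₂ = φ₁ h * g₁ * h) :
    ∃ α : Gb₁ ≃* Gb₂, ∀ a : G, α (ι₁ a) = ι₂ a := by
  obtain ⟨h, hφ, hg⟩ := heq
  obtain ⟨hφ', hg'⟩ := MulAut.pair_equiv_symm hφ hg
  obtain ⟨α, hαι, hαx⟩ := MonoidHom.exists_lift_of_index_eq_two hinj₁ hidx₁ hx₁ ⟨hφ₁, hg₁⟩ ι₂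
    (MulAut.realizes_of_pair_equiv ⟨hφ₂, hg₂⟩ hφ hg)
  obtain ⟨β, hβι, hβx⟩ := MonoidHom.exists_lift_of_index_eq_two hinj₂ hidx₂ hx₂ ⟨hφ₂, hg₂⟩ ι₁
    (MulAut.realizes_of_pair_equiv ⟨hφ₁, hg₁⟩ hφ' hg')
  refine ⟨α.toMulEquiv β ?_ ?_, hαι⟩
  · refine MonoidHom.hom_ext_of_index_eq_two hidx₁ hx₁ (fun a => ?_) ?_
    · simp [hαι, hβι]
    · simp [hαx, hβx, hβι]
  · refine MonoidHom.hom_ext_of_index_eq_two hidx₂ hx₂ (fun a => ?_) ?_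
    · simp [hαι, hβι]
    · simp [hαx, hβx, hαι]

/-- Equivalent pairs in `P(G)` give isomorphic extensions of `G` by `C₂`. -/
theorem stmt_5 {G : Type*} [Group G] {Gb₁ Gb₂ : Type*} [Group Gb₁] [Group Gb₂]
    (ι₁ : G →* Gb₁) (ι₂ : G →* Gb₂)
    (hinj₁ : Function.Injective ι₁) (hinj₂ : Function.Injective ι₂)
    (hn₁ : ι₁.range.Normal) (hn₂ : ι₂.range.Normal)
    (hidx₁ : ι₁.range.index = 2) (hidx₂ : ι₂.range.index = 2)
    (x₁ : Gb₁) (x₂ : Gb₂) (hx₁ : x₁ ∉ ι₁.range) (hx₂ : x₂ ∉ ι₂.range)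
    (φ₁ φ₂ : MulAut G)
    (hφ₁ : ∀ a : G, ι₁ (φ₁ a) = x₁ * ι₁ a * x₁⁻¹)
    (hφ₂ : ∀ a : G, ι₂ (φ₂ a) = x₂ * ι₂ a * x₂⁻¹)
    (g₁ g₂ : G) (hg₁ : ι₁ g₁ = x₁ ^ 2) (hg₂ : ι₂ g₂ = x₂ ^ 2)
    (heq : ∃ h : G, φ₂ = φ₁ * MulAut.conj h ∧ g₂ = φ₁ h * g₁ * h) :
    ∃ α : Gb₁ ≃* Gb₂, ∀ a : G, α (ι₁ a) = ι₂ a :=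
  stmt_5_general ι₁ ι₂ hinj₁ hinj₂ hidx₁ hidx₂ x₁ x₂ hx₁ hx₂ φ₁ φ₂ hφ₁ hφ₂ g₁ g₂ hg₁ hg₂ heq
end

section
/- Let G be a group and for i = 1, 2 let Ḡᵢ be a group, ιᵢ : G → Ḡᵢ an injective homomorphism whose image is a normal subgroup of index 2, and xᵢ ∈ Ḡᵢ with xᵢ ∉ ιᵢ(G). Let φᵢ be the automorphism of G determined by ιᵢ(φᵢ(a)) = xᵢ·ιᵢ(a)·xᵢ⁻¹ for all a ∈ G, and let gᵢ ∈ G be the element with ιᵢ(gᵢ) = xᵢ². If there exists a group isomorphism α : Ḡ₁ → Ḡ₂ with α ∘ ι₁ = ι₂, then there exists h ∈ G with φ₂ = φ₁ ∘ conj_h and g₂ = φ₁(h)·g₁·h. (Isomorphic extensions of G by C₂ give equivalent pairs in P(G).) -/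
/-!
An isomorphism `α` of extensions lets `α x₁` serve as a representative of the non-trivial coset
of `ι₂(G)`, and it induces the same pair `(φ₁, g₁)` as `x₁`. Since `ι₂(G)` has index two, the
two representatives `α x₁` and `x₂` differ by some `ι₂ h`, and replacing a representative `x` by
`x · ι h` replaces `(φ, g)` by `(φ ∘ conj_h, φ(h) · g · h)`.
-/

theorem Subgroup.inv_mul_mem_of_index_two {K : Type*} [Group K] {H : Subgroup K}
    (hH : H.index = 2) {x y : K} (hx : x ∉ H) (hy : y ∉ H) : x⁻¹ * y ∈ H := by
  rw [Subgroup.mul_mem_iff_of_index_two hH, inv_mem_iff]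
  exact iff_of_false hx hy

section ChangeOfRepresentative

variable {G E : Type*} [Group G] [Group E] {ι : G →* E} {x : E} {φ : MulAut G}

theorem mulAut_eq_mul_conj_of_eq_mul (hinj : Function.Injective ι)
    (hφ : ∀ a, ι (φ a) = x * ι a * x⁻¹) {y : E} {ψ : MulAut G}
    (hψ : ∀ a, ι (ψ a) = y * ι a * y⁻¹) {h : G} (hy : y = x * ι h) :
    ψ = φ * MulAut.conj h := by
  ext a
  apply hinj
  rw [MulAut.mul_apply, MulAut.conj_apply, hψ, hφ, hy]
  simp only [map_mul, map_inv]
  group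

theorem eq_apply_mul_mul_of_eq_mul (hinj : Function.Injective ι)
    (hφ : ∀ a, ι (φ a) = x * ι a * x⁻¹) {g g' : G} (hg : ι g = x ^ 2) {y : E}
    (hg' : ι g' = y ^ 2) {h : G} (hy : y = x * ι h) :
    g' = φ h * g * h := by
  apply hinj
  rw [hg', hy, map_mul, map_mul, hφ, hg, sq, sq]
  group

end ChangeOfRepresentative

section Transport

variable {G E₁ E₂ : Type*} [Group G] [Group E₁] [Group E₂] {ι₁ : G →* E₁} {ι₂ : G →* E₂}
  {α : E₁ ≃* E₂}

theorem apply_mem_range_iff_of_comp_eq (hα : ∀ a, α (ι₁ a) = ι₂ a) {x : E₁} :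
    α x ∈ ι₂.range ↔ x ∈ ι₁.range := by
  constructor
  · rintro ⟨a, ha⟩
    exact ⟨a, α.injective (by rw [hα, ha])⟩
  · rintro ⟨a, rfl⟩
    exact ⟨a, (hα a).symm⟩

theorem conj_apply_of_comp_eq (hα : ∀ a, α (ι₁ a) = ι₂ a) {x : E₁} {φ : MulAut G}
    (hφ : ∀ a, ι₁ (φ a) = x * ι₁ a * x⁻¹) (a : G) :
    ι₂ (φ a) = α x * ι₂ a * (α x)⁻¹ := by
  rw [← hα, hφ, map_mul, map_mul, map_inv, hα]

theorem sq_apply_of_comp_eq (hα : ∀ a, α (ι₁ a) = ι₂ a) {x : E₁} {g : G}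
    (hg : ι₁ g = x ^ 2) : ι₂ g = α x ^ 2 := by
  rw [← hα, hg, map_pow]

end Transport

theorem stmt_6_general {G : Type*} [Group G] {Gb₁ Gb₂ : Type*} [Group Gb₁] [Group Gb₂]
    (ι₁ : G →* Gb₁) (ι₂ : G →* Gb₂)
    (hinj₂ : Function.Injective ι₂)
    (hidx₂ : ι₂.range.index = 2)
    (x₁ : Gb₁) (x₂ : Gb₂) (hx₁ : x₁ ∉ ι₁.range) (hx₂ : x₂ ∉ ι₂.range)
    (φ₁ φ₂ : MulAut G)
    (hφ₁ : ∀ a : G, ι₁ (φ₁ a) = x₁ * ι₁ a * x₁⁻¹)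
    (hφ₂ : ∀ a : G, ι₂ (φ₂ a) = x₂ * ι₂ a * x₂⁻¹)
    (g₁ g₂ : G) (hg₁ : ι₁ g₁ = x₁ ^ 2) (hg₂ : ι₂ g₂ = x₂ ^ 2)
    (hiso : ∃ α : Gb₁ ≃* Gb₂, ∀ a : G, α (ι₁ a) = ι₂ a) :
    ∃ h : G, φ₂ = φ₁ * MulAut.conj h ∧ g₂ = φ₁ h * g₁ * h := by
  obtain ⟨α, hα⟩ := hiso
  have hαx₁ : α x₁ ∉ ι₂.range := (apply_mem_range_iff_of_comp_eq hα).not.mpr hx₁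
  obtain ⟨h, hh⟩ := Subgroup.inv_mul_mem_of_index_two hidx₂ hαx₁ hx₂
  have hx₂_eq : x₂ = α x₁ * ι₂ h := by rw [hh, mul_inv_cancel_left]
  have hφ₁' := conj_apply_of_comp_eq hα hφ₁
  exact ⟨h, mulAut_eq_mul_conj_of_eq_mul hinj₂ hφ₁' hφ₂ hx₂_eq,
    eq_apply_mul_mul_of_eq_mul hinj₂ hφ₁' (sq_apply_of_comp_eq hα hg₁) hg₂ hx₂_eq⟩

/-- Isomorphic extensions of `G` by `C₂` give equivalent pairs in `P(G)`. -/
theorem stmt_6 {G : Type*} [Group G] {Gb₁ Gb₂ : Type*} [Group Gb₁] [Group Gb₂]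
    (ι₁ : G →* Gb₁) (ι₂ : G →* Gb₂)
    (hinj₁ : Function.Injective ι₁) (hinj₂ : Function.Injective ι₂)
    (hn₁ : ι₁.range.Normal) (hn₂ : ι₂.range.Normal)
    (hidx₁ : ι₁.range.index = 2) (hidx₂ : ι₂.range.index = 2)
    (x₁ : Gb₁) (x₂ : Gb₂) (hx₁ : x₁ ∉ ι₁.range) (hx₂ : x₂ ∉ ι₂.range)
    (φ₁ φ₂ : MulAut G)
    (hφ₁ : ∀ a : G, ι₁ (φ₁ a) = x₁ * ι₁ a * x₁⁻¹)
    (hφ₂ : ∀ a : G, ι₂ (φ₂ a) = x₂ * ι₂ a * x₂⁻¹)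
    (g₁ g₂ : G) (hg₁ : ι₁ g₁ = x₁ ^ 2) (hg₂ : ι₂ g₂ = x₂ ^ 2)
    (hiso : ∃ α : Gb₁ ≃* Gb₂, ∀ a : G, α (ι₁ a) = ι₂ a) :
    ∃ h : G, φ₂ = φ₁ * MulAut.conj h ∧ g₂ = φ₁ h * g₁ * h :=
  stmt_6_general ι₁ ι₂ hinj₂ hidx₂ x₁ x₂ hx₁ hx₂ φ₁ φ₂ hφ₁ hφ₂ g₁ g₂ hg₁ hg₂ hiso
end

section
/- Let Ḡ be a group, G a normal subgroup of Ḡ of index 2, x ∈ Ḡ with x ∉ G, and let φ_x denote the automorphism of G given by conjugation by x. Then there exists y ∈ Ḡ with y ∉ G and y² = 1 (i.e. the extension of G by C₂ splits) if and only if there exists h ∈ G with φ_x(h)·x²·h = 1; equivalently, if and only if the pair (φ_x, x²) is equivalent in P(G) to a pair whose second coordinate is the identity element. -/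
/-!
The elements outside an index-two subgroup `G` are exactly the `x * h` with `h ∈ G`, and
`(x * h)² = (x h x⁻¹) · x² · h = φ_x(h) · x² · h`.
-/

namespace Subgroup

variable {Gb : Type*} [Group Gb] {G : Subgroup Gb}

theorem notMem_iff_inv_mul_mem_of_index_two (hidx : G.index = 2) {x y : Gb} (hx : x ∉ G) :
    y ∉ G ↔ x⁻¹ * y ∈ G := by
  rw [G.mul_mem_iff_of_index_two hidx, inv_mem_iff]
  tauto

theorem exists_notMem_iff_exists_mul_of_index_two (hidx : G.index = 2) {x : Gb} (hx : x ∉ G)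
    (p : Gb → Prop) : (∃ y, y ∉ G ∧ p y) ↔ ∃ h : G, p (x * h) := by
  constructor
  · rintro ⟨y, hyG, hy⟩
    exact ⟨⟨x⁻¹ * y, (notMem_iff_inv_mul_mem_of_index_two hidx hx).1 hyG⟩, by simpa using hy⟩
  · rintro ⟨h, hh⟩
    exact ⟨x * h, (notMem_iff_inv_mul_mem_of_index_two hidx hx).2 (by simp), hh⟩

end Subgroup

theorem stmt_7_general {Gb : Type*} [Group Gb] (G : Subgroup Gb)
    (hidx : G.index = 2) (x : Gb) (hx : x ∉ G)
    (φx : MulAut G)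
    (hφx : ∀ a : G, ((φx a : G) : Gb) = x * a * x⁻¹) :
    (∃ y : Gb, y ∉ G ∧ y ^ 2 = 1) ↔
      ∃ h : G, ((φx h : G) : Gb) * x ^ 2 * (h : Gb) = 1 := by
  have hsq (h : G) : ((φx h : G) : Gb) * x ^ 2 * h = (x * h) ^ 2 := by
    rw [hφx, sq, sq]
    group
  simp only [hsq]
  exact Subgroup.exists_notMem_iff_exists_mul_of_index_two hidx hx _

/-- The extension `Gb` of an index-2 normal subgroup `G` splits (there is
`y ∉ G` with `y² = 1`) if and only if there exists `h ∈ G` with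
`φ_x(h) · x² · h = 1`, i.e. `(φ_x, x²)` is equivalent in `P(G)` to a pair whose
second coordinate is the identity. -/
theorem stmt_7 {Gb : Type*} [Group Gb] (G : Subgroup Gb) [G.Normal]
    (hidx : G.index = 2) (x : Gb) (hx : x ∉ G)
    (φx : MulAut G)
    (hφx : ∀ a : G, ((φx a : G) : Gb) = x * a * x⁻¹) :
    (∃ y : Gb, y ∉ G ∧ y ^ 2 = 1) ↔
      ∃ h : G, ((φx h : G) : Gb) * x ^ 2 * (h : Gb) = 1 :=
  stmt_7_general G hidx x hx φx hφx
end

section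
/- Let Ḡ be a group, G a normal subgroup of Ḡ of index 2, x ∈ Ḡ with x ∉ G, and let φ_x denote the automorphism of G given by conjugation by x. Then there exists y ∈ Ḡ with y ∉ G, y² = 1 and y·a = a·y for all a ∈ G (i.e. Ḡ is the internal direct product of G with a subgroup of order 2) if and only if there exists h ∈ G with φ_x ∘ conj_h = id_G and φ_x(h)·x²·h = 1; equivalently, if and only if the pair (φ_x, x²) is equivalent in P(G) to the pair (id_G, 1). -/
/-!
Writing `y = x * h`, the element `y ∉ G` runs exactly over the coset `x G` (as `G` has index 2),
and for `h ∈ G` one computes `(φ_x ∘ conj_h)(a) = y a y⁻¹` and `φ_x(h) · x² · h = y²`.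
So `y` is an involution centralizing `G` precisely when `h` satisfies the two conditions.
-/

section ConjugationByOuterElement

variable {Gb : Type*} [Group Gb] {G : Subgroup Gb} {x : Gb} {φ : MulAut G}

theorem coe_mulAut_conj_apply (hφ : ∀ a : G, ((φ a : G) : Gb) = x * a * x⁻¹) (h a : G) :
    (((φ * MulAut.conj h) a : G) : Gb) = x * h * a * (x * h)⁻¹ := by
  simp only [MulAut.mul_apply, MulAut.conj_apply, hφ, Subgroup.coe_mul, Subgroup.coe_inv]
  group

theorem mul_mulAut_conj_eq_one_iff (hφ : ∀ a : G, ((φ a : G) : Gb) = x * a * x⁻¹) (h : G) :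
    φ * MulAut.conj h = 1 ↔ ∀ a ∈ G, x * h * a = a * (x * h) := by
  simp only [MulEquiv.ext_iff, MulAut.one_apply, Subtype.ext_iff, coe_mulAut_conj_apply hφ,
    mul_inv_eq_iff_eq_mul, Subtype.forall]

theorem coe_mulAut_apply_mul_sq_mul (hφ : ∀ a : G, ((φ a : G) : Gb) = x * a * x⁻¹) (h : G) :
    ((φ h : G) : Gb) * x ^ 2 * h = (x * h) ^ 2 := by
  rw [hφ, sq, sq]
  group

end ConjugationByOuterElement

theorem stmt_8_general {Gb : Type*} [Group Gb] (G : Subgroup Gb)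
    (hidx : G.index = 2) (x : Gb) (hx : x ∉ G)
    (φx : MulAut G)
    (hφx : ∀ a : G, ((φx a : G) : Gb) = x * a * x⁻¹) :
    (∃ y : Gb, y ∉ G ∧ y ^ 2 = 1 ∧ ∀ a ∈ G, y * a = a * y) ↔
      ∃ h : G, φx * MulAut.conj h = 1 ∧
        ((φx h : G) : Gb) * x ^ 2 * (h : Gb) = 1 := by
  constructor
  · rintro ⟨y, hyG, hy2, hyc⟩
    have hxy : x⁻¹ * y ∈ G := by
      rw [Subgroup.mul_mem_iff_of_index_two hidx]
      exact iff_of_false (mt G.inv_mem_iff.mp hx) hyG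
    refine ⟨⟨x⁻¹ * y, hxy⟩, (mul_mulAut_conj_eq_one_iff hφx _).2 ?_, ?_⟩
    · simpa only [mul_inv_cancel_left] using hyc
    · rw [coe_mulAut_apply_mul_sq_mul hφx, mul_inv_cancel_left, hy2]
  · rintro ⟨h, hconj, hsq⟩
    refine ⟨x * h, fun hxh => hx ?_, ?_, (mul_mulAut_conj_eq_one_iff hφx h).1 hconj⟩
    · simpa using mul_mem hxh (inv_mem h.2)
    · rwa [coe_mulAut_apply_mul_sq_mul hφx] at hsq

/-- The extension `Gb` of an index-2 normal subgroup `G` is a direct product of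
`G` with a subgroup of order 2 (there is `y ∉ G` with `y² = 1` commuting with all
of `G`) if and only if there exists `h ∈ G` with `φ_x ∘ conj_h = id` and
`φ_x(h) · x² · h = 1`, i.e. `(φ_x, x²)` is equivalent in `P(G)` to `(id, 1)`. -/
theorem stmt_8 {Gb : Type*} [Group Gb] (G : Subgroup Gb) [G.Normal]
    (hidx : G.index = 2) (x : Gb) (hx : x ∉ G)
    (φx : MulAut G)
    (hφx : ∀ a : G, ((φx a : G) : Gb) = x * a * x⁻¹) :
    (∃ y : Gb, y ∉ G ∧ y ^ 2 = 1 ∧ ∀ a ∈ G, y * a = a * y) ↔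
      ∃ h : G, φx * MulAut.conj h = 1 ∧
        ((φx h : G) : Gb) * x ^ 2 * (h : Gb) = 1 :=
  stmt_8_general G hidx x hx φx hφx
end

section
/- Let Ḡ be a group and G a normal subgroup of Ḡ of index 2. Assume that the center of G is trivial and that x ∈ Ḡ \ G is such that conjugation by x restricted to G is an inner automorphism of G. Then there exists y ∈ Ḡ with y ∉ G, y² = 1, and y·a = a·y for every a ∈ G; in particular Ḡ is the internal direct product of G with the order-2 subgroup generated by y. -/
theorem inv_mul_mem_centralizer_of_conj_eq {G : Type*} [Group G] {s : Set G} {x h : G}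
    (hconj : ∀ a ∈ s, x * a * x⁻¹ = h * a * h⁻¹) : h⁻¹ * x ∈ Subgroup.centralizer s := by
  refine Subgroup.mem_centralizer_iff.2 fun a ha => ?_
  calc a * (h⁻¹ * x) = h⁻¹ * (h * a * h⁻¹) * x := by group
    _ = h⁻¹ * (x * a * x⁻¹) * x := by rw [hconj a ha]
    _ = h⁻¹ * x * a := by group

theorem Subgroup.eq_one_of_mem_centralizer_of_center_eq_bot {G : Type*} [Group G]
    {H : Subgroup G} (hH : Subgroup.center H = ⊥) {z : G} (hz : z ∈ H)
    (hcent : z ∈ Subgroup.centralizer H) : z = 1 := by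
  have hcenter : (⟨z, hz⟩ : H) ∈ Subgroup.center H :=
    Subgroup.mem_center_iff.2 fun a => Subtype.ext (Subgroup.mem_centralizer_iff.1 hcent a a.2)
  rw [hH, Subgroup.mem_bot] at hcenter
  exact congrArg Subtype.val hcenter

theorem stmt_9_general {Gb : Type*} [Group Gb] (G : Subgroup Gb)
    (hidx : G.index = 2)
    (hcenter : Subgroup.center ↥G = ⊥)
    (x : Gb) (hx : x ∉ G)
    (hinner : ∃ h ∈ G, ∀ a ∈ G, x * a * x⁻¹ = h * a * h⁻¹) :
    ∃ y : Gb, y ∉ G ∧ y ^ 2 = 1 ∧ ∀ a ∈ G, y * a = a * y := by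
  obtain ⟨h, hh, hconj⟩ := hinner
  have hcent : h⁻¹ * x ∈ Subgroup.centralizer G := inv_mul_mem_centralizer_of_conj_eq hconj
  refine ⟨h⁻¹ * x, fun hy => hx ?_, ?_, fun a ha => ?_⟩
  · simpa using G.mul_mem hh hy
  · exact Subgroup.eq_one_of_mem_centralizer_of_center_eq_bot hcenter
      (Subgroup.sq_mem_of_index_two hidx _) (pow_mem hcent 2)
  · exact (Subgroup.mem_centralizer_iff.1 hcent a ha).symm

/-- If `G` is an index-2 normal subgroup of `Gb` with trivial center and some
`x ∈ Gb \ G` conjugates `G` by an inner automorphism, then there is `y ∈ Gb \ G`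
with `y² = 1` commuting with every element of `G`. -/
theorem stmt_9 {Gb : Type*} [Group Gb] (G : Subgroup Gb) [G.Normal]
    (hidx : G.index = 2)
    (hcenter : Subgroup.center ↥G = ⊥)
    (x : Gb) (hx : x ∉ G)
    (hinner : ∃ h ∈ G, ∀ a ∈ G, x * a * x⁻¹ = h * a * h⁻¹) :
    ∃ y : Gb, y ∉ G ∧ y ^ 2 = 1 ∧ ∀ a ∈ G, y * a = a * y :=
  stmt_9_general G hidx hcenter x hx hinner
end

section
/- Let G be a group with trivial center such that the outer automorphism group Out(G) = Aut(G)/Inn(G) contains no element of order 2, i.e. every automorphism ψ of G with ψ ∘ ψ inner is itself inner. Then for every group Ḡ containing G as a normal subgroup of index 2, there exists y ∈ Ḡ with y ∉ G, y² = 1, and y·a = a·y for every a ∈ G. In particular, every extension of G by the cyclic group of order 2 is a direct product G × C₂. -/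
/-!
Conjugation by `x ∈ Ḡ \ G` induces an automorphism `ψ` of `G` whose square is conjugation by
`x² ∈ G`, so `ψ` is inner, say conjugation by `h₀`. Then `y = h₀⁻¹ x` lies outside `G` and
centralizes `G`; its square lies in `G` and is central there, hence trivial.
-/

theorem MulAut.conj_eq_one_iff {G : Type*} [Group G] {n : G} :
    MulAut.conj n = 1 ↔ n ∈ Subgroup.center G := by
  rw [Subgroup.mem_center_iff, MulEquiv.ext_iff]
  refine forall_congr' fun g => ?_
  rw [MulAut.conj_apply, MulAut.one_apply, mul_inv_eq_iff_eq_mul, eq_comm]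

namespace GroupExtension

noncomputable def ofInjective {N E : Type*} [Group N] [Group E] (ι : N →* E)
    (hι : Function.Injective ι) [ι.range.Normal] : GroupExtension N E (E ⧸ ι.range) where
  inl := ι
  rightHom := QuotientGroup.mk' ι.range
  inl_injective := hι
  range_inl_eq_ker_rightHom := (QuotientGroup.ker_mk' _).symm
  rightHom_surjective := QuotientGroup.mk'_surjective _

variable {N E G : Type*} [Group N] [Group E] [Group G] (S : GroupExtension N E G)

theorem conjAct_inl (n : N) : S.conjAct (S.inl n) = MulAut.conj n := by
  ext m
  apply S.inl_injective
  rw [inl_conjAct_comm, MulAut.conj_apply, map_mul, map_mul, map_inv]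

theorem conjAct_eq_one_iff {e : E} :
    S.conjAct e = 1 ↔ ∀ n, e * S.inl n = S.inl n * e := by
  rw [MulEquiv.ext_iff]
  refine forall_congr' fun n => ?_
  rw [MulAut.one_apply, ← S.inl_injective.eq_iff, inl_conjAct_comm, mul_inv_eq_iff_eq_mul]

theorem eq_one_of_mem_range_of_conjAct_eq_one (hZ : Subgroup.center N = ⊥) {e : E}
    (he : e ∈ S.inl.range) (hc : S.conjAct e = 1) : e = 1 := by
  obtain ⟨n, rfl⟩ := he
  rw [conjAct_inl, MulAut.conj_eq_one_iff, hZ, Subgroup.mem_bot] at hc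
  rw [hc, map_one]

end GroupExtension

/-- If `G` has trivial center and `Out(G)` has no involutions (every automorphism
whose square is inner is itself inner), then every extension of `G` by `C₂` is a
direct product: any group containing `G` as an index-2 normal subgroup contains
an element `y ∉ G` with `y² = 1` centralizing `G`. -/
theorem stmt_10 {G : Type*} [Group G]
    (hcenter : Subgroup.center G = ⊥)
    (hout : ∀ ψ : MulAut G, (∃ h : G, ψ * ψ = MulAut.conj h) →
      ∃ h : G, ψ = MulAut.conj h) :
    ∀ (Gb : Type*) [Group Gb] (ι : G →* Gb),
      Function.Injective ι → ι.range.Normal → ι.range.index = 2 →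
      ∃ y : Gb, y ∉ ι.range ∧ y ^ 2 = 1 ∧ ∀ a : G, y * ι a = ι a * y := by
  intro Gb _ ι hinj _ hidx
  let S := GroupExtension.ofInjective ι hinj
  obtain ⟨x, hx⟩ := SetLike.exists_not_mem_of_ne_top ι.range
    (fun h => by simp [h] at hidx) rfl
  obtain ⟨h, hh⟩ := Subgroup.sq_mem_of_index_two hidx x
  obtain ⟨h₀, hh₀⟩ := hout (S.conjAct x)
    ⟨h, by rw [← map_mul, ← sq, ← hh]; exact S.conjAct_inl h⟩
  set y := (ι h₀)⁻¹ * x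
  have hy : S.conjAct y = 1 := by
    change S.conjAct ((S.inl h₀)⁻¹ * x) = 1
    rw [map_mul, map_inv, S.conjAct_inl, hh₀, inv_mul_cancel]
  have hcomm := (S.conjAct_eq_one_iff).mp hy
  refine ⟨y, fun hy' => hx ?_, ?_, hcomm⟩
  · exact (ι.range.mul_mem_cancel_left (inv_mem (ι.mem_range.mpr ⟨h₀, rfl⟩))).mp hy'
  · refine S.eq_one_of_mem_range_of_conjAct_eq_one hcenter
      (Subgroup.sq_mem_of_index_two hidx y) ?_
    rw [map_pow, hy, one_pow]
end

section
/- Let n ≥ 1 and let G be a subgroup of index 2 of the dihedral group D_n of order 2n. Then there exists x ∈ D_n with x ∉ G and x² = 1; in particular D_n is never a non-split extension of a subgroup by the cyclic group of order 2. (Consequently, no dihedral group is the full automorphism group of a pseudoreal Riemann surface.) -/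
namespace DihedralGroup

theorem eq_top_of_forall_sr_mem {n : ℕ} {H : Subgroup (DihedralGroup n)}
    (h : ∀ i : ZMod n, sr i ∈ H) : H = ⊤ := by
  rw [Subgroup.eq_top_iff']
  rintro (i | i)
  · simpa only [sr_mul_sr, sub_zero] using H.mul_mem (h 0) (h i)
  · exact h i

theorem exists_sr_notMem_of_ne_top {n : ℕ} {H : Subgroup (DihedralGroup n)} (hH : H ≠ ⊤) :
    ∃ i : ZMod n, sr i ∉ H := by
  by_contra! h
  exact hH (eq_top_of_forall_sr_mem h)

theorem sr_sq {n : ℕ} (i : ZMod n) : sr i ^ 2 = 1 := by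
  rw [sq, sr_mul_self]

end DihedralGroup

theorem stmt_15_general (n : ℕ) (G : Subgroup (DihedralGroup n))
    (hidx : G.index = 2) :
    ∃ x : DihedralGroup n, x ∉ G ∧ x ^ 2 = 1 := by
  have hG : G ≠ ⊤ := fun h => by simp [h] at hidx
  obtain ⟨i, hi⟩ := DihedralGroup.exists_sr_notMem_of_ne_top hG
  exact ⟨DihedralGroup.sr i, hi, DihedralGroup.sr_sq i⟩

/-- For `n ≥ 1`, any index-2 subgroup `G` of the dihedral group `D_n` of order
`2n` admits an element `x ∉ G` with `x² = 1`; so `D_n` is never a non-split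
extension by `C₂`. -/
theorem stmt_15 (n : ℕ) (hn : 1 ≤ n) (G : Subgroup (DihedralGroup n))
    (hidx : G.index = 2) :
    ∃ x : DihedralGroup n, x ∉ G ∧ x ^ 2 = 1 :=
  stmt_15_general n G hidx
end
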